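/- arXiv:1809.02692 — 2 statements merged into one kernel-verified Lean document; each statement's English description precedes it below -/
import Mathlib

section
/- Let G be a group with finite generating set S, Σ = S ∪ S⁻¹, and fix D ≥ 0. There exists m ∈ ℕ such that for any two geodesic words u and v over Σ, if u and v have the same m-tail (T_m(u) = T_m(v)) and the same m-local contracting type ({w : |w| ≤ m and uw ∈ L_D} = {w : |w| ≤ m and vw ∈ L_D}), then u and v have the same D-contracting cone: Cone^D(u) = Cone^D(v). -/
/-! Words over the alphabet `Σ = S ∪ S⁻¹` in a group `G` with finite generating
set `S`, word length, geodesic words, and `D`-contracting geodesic words. -/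

section Defs

variable {G : Type*} [Group G]

/-- `g` is a letter of the alphabet `Σ = S ∪ S⁻¹`. -/
def IsLetter (S : Finset G) (g : G) : Prop := g ∈ S ∨ g⁻¹ ∈ S

/-- The word length `|g|`: the minimum length of a list over `Σ = S ∪ S⁻¹`
whose product is `g`. -/
noncomputable def wordLength (S : Finset G) (g : G) : ℕ :=
  sInf {n | ∃ l : List G, (∀ x ∈ l, IsLetter S x) ∧ l.prod = g ∧ l.length = n}

/-- The word metric `d(g,h) = |g⁻¹h|`. -/
noncomputable def wordDist (S : Finset G) (g h : G) : ℕ := wordLength S (g⁻¹ * h)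

/-- A word (list of letters of `Σ`) is geodesic if the word length of its
product equals its length. -/
def IsGeodesicWord (S : Finset G) (w : List G) : Prop :=
  (∀ x ∈ w, IsLetter S x) ∧ wordLength S w.prod = w.length

/-- `P_{i,j}(w)`: the vertices `a₁⋯a_k` for `i ≤ k ≤ j` of the subsegment of
the path of prefix products of `w`. -/
def segVerts (w : List G) (i j : ℕ) : Set G :=
  {g | ∃ k, i ≤ k ∧ k ≤ j ∧ (w.take k).prod = g}

/-- The closed ball of radius `r` about `g₀` in the word metric. -/
def wordBall (S : Finset G) (g₀ : G) (r : ℕ) : Set G :=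
  {h | wordDist S g₀ h ≤ r}

/-- The projection `π_P(x)` of a point `x` to a subset `P` of `G`:
the points of `P` at minimal word-metric distance from `x`. -/
def projPt (S : Finset G) (P : Set G) (x : G) : Set G :=
  {p ∈ P | ∀ q ∈ P, wordDist S x p ≤ wordDist S x q}

/-- The projection `π_P(B) = ⋃_{x ∈ B} π_P(x)` of a set `B` to `P`. -/
def projSet (S : Finset G) (P B : Set G) : Set G :=
  ⋃ x ∈ B, projPt S P x

/-- A word `w` over `Σ` is a `D`-contracting geodesic word if it is geodesic
and, for every `0 ≤ i ≤ j ≤ |w|` and every ball `B` (in the word metric)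
disjoint from `P_{i,j}(w)`, the diameter of `π_{P_{i,j}(w)}(B)` in the word
metric is at most `D`. -/
def IsContractingWord (S : Finset G) (D : ℝ) (w : List G) : Prop :=
  IsGeodesicWord S w ∧
    ∀ i j : ℕ, i ≤ j → j ≤ w.length → ∀ g₀ : G, ∀ r : ℕ,
      Disjoint (wordBall S g₀ r) (segVerts w i j) →
        ∀ p ∈ projSet S (segVerts w i j) (wordBall S g₀ r),
          ∀ q ∈ projSet S (segVerts w i j) (wordBall S g₀ r),
            (wordDist S p q : ℝ) ≤ D

end Defs

section Cones

variable {G : Type*} [Group G]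

/-- The `D`-contracting cone of a word `u`: all words `w` over `Σ` such that
the concatenation `uw` is a `D`-contracting geodesic word. -/
def cone (S : Finset G) (D : ℝ) (u : List G) : Set (List G) :=
  {w | (∀ x ∈ w, IsLetter S x) ∧ IsContractingWord S D (u ++ w)}

/-- The `m`-tail of a word `u`: all `h ∈ G` with `|h| ≤ m` and `|ūh| < |ū|`. -/
def mTail (S : Finset G) (m : ℕ) (u : List G) : Set G :=
  {h | wordLength S h ≤ m ∧ wordLength S (u.prod * h) < wordLength S u.prod}

/-- The `m`-local contracting type of `u`: all words `w` over `Σ` with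
`|w| ≤ m` such that `uw` is a `D`-contracting geodesic word. -/
def localContractingType (S : Finset G) (D : ℝ) (m : ℕ) (u : List G) : Set (List G) :=
  {w | w.length ≤ m ∧ (∀ x ∈ w, IsLetter S x) ∧ IsContractingWord S D (u ++ w)}

end Cones

/-!
Take `m = 24⌊D⌋ + 23` and show `Cone(u) ⊆ Cone(v)` by induction on `w ∈ Cone(u)`, words of
length at most `m` being covered by the local type. Let `w c ∈ Cone(u)` with `|w| ≥ m` and
`w ∈ Cone(v)`. If `v w c` were not geodesic, a geodesic to its endpoint would, by the Morse
property of the contracting path `v w`, fellow-travel it and pass through a point `g` with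
`|g| = |v| - 1` and `d(v̄, g) ≤ m`. Then `v̄⁻¹ g` lies in the `m`-tail of `v`, hence of `u`, and
shortens `u w c` as well. The segments of `v w c` contract: those inside `v w` by induction, those
inside `w c` because they are translates of segments of `u w c`, and a segment meeting both is
glued from one of each, their overlap `w` being longer than `2D + 2`.
-/

section WordLength

variable {G : Type*} [Group G] {S : Finset G}

lemma IsLetter.inv {x : G} (h : IsLetter S x) : IsLetter S x⁻¹ := by
  unfold IsLetter at *
  rwa [inv_inv, or_comm]

lemma exists_isLetter_prod_eq (hS : Subgroup.closure (S : Set G) = ⊤) (g : G) :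
    ∃ l : List G, (∀ x ∈ l, IsLetter S x) ∧ l.prod = g := by
  have hg : g ∈ (Subgroup.closure (S : Set G)).toSubmonoid := by simp [hS]
  rw [Subgroup.closure_toSubmonoid] at hg
  exact Submonoid.exists_list_of_mem_closure hg

lemma wordLength_le_length {l : List G} (hl : ∀ x ∈ l, IsLetter S x) :
    wordLength S l.prod ≤ l.length :=
  Nat.sInf_le ⟨l, hl, rfl, rfl⟩

lemma exists_isGeodesicWord_prod_eq (hS : Subgroup.closure (S : Set G) = ⊤) (g : G) :
    ∃ l : List G, IsGeodesicWord S l ∧ l.prod = g := by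
  obtain ⟨l, hl, hprod, hlen⟩ : ∃ l : List G, (∀ x ∈ l, IsLetter S x) ∧ l.prod = g ∧
      l.length = wordLength S g := by
    obtain ⟨l, hl, hprod⟩ := exists_isLetter_prod_eq hS g
    exact Nat.sInf_mem (s := {n | ∃ l : List G, (∀ x ∈ l, IsLetter S x) ∧ l.prod = g ∧
      l.length = n}) ⟨l.length, l, hl, hprod, rfl⟩
  exact ⟨l, ⟨hl, by rw [hprod, hlen]⟩, hprod⟩

@[simp] lemma wordLength_one : wordLength S (1 : G) = 0 :=
  Nat.le_zero.1 (wordLength_le_length (l := []) (by simp))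

lemma wordLength_eq_zero_iff (hS : Subgroup.closure (S : Set G) = ⊤) {g : G} :
    wordLength S g = 0 ↔ g = 1 := by
  refine ⟨fun h => ?_, fun h => h ▸ wordLength_one⟩
  obtain ⟨l, ⟨-, hlen⟩, rfl⟩ := exists_isGeodesicWord_prod_eq hS g
  rw [h, eq_comm, List.length_eq_zero_iff] at hlen
  simp [hlen]

lemma wordLength_mul_le (hS : Subgroup.closure (S : Set G) = ⊤) (g h : G) :
    wordLength S (g * h) ≤ wordLength S g + wordLength S h := by
  obtain ⟨l₁, ⟨hl₁, hlen₁⟩, rfl⟩ := exists_isGeodesicWord_prod_eq hS g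
  obtain ⟨l₂, ⟨hl₂, hlen₂⟩, rfl⟩ := exists_isGeodesicWord_prod_eq hS h
  rw [hlen₁, hlen₂, ← List.prod_append, ← List.length_append]
  exact wordLength_le_length (List.forall_mem_append.2 ⟨hl₁, hl₂⟩)

lemma wordLength_inv (g : G) : wordLength S g⁻¹ = wordLength S g := by
  suffices h : ∀ g : G,
      {n | ∃ l : List G, (∀ x ∈ l, IsLetter S x) ∧ l.prod = g⁻¹ ∧ l.length = n} ⊆
      {n | ∃ l : List G, (∀ x ∈ l, IsLetter S x) ∧ l.prod = g ∧ l.length = n} by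
    exact congrArg sInf ((h g).antisymm (by simpa using h g⁻¹))
  rintro g n ⟨l, hl, hprod, rfl⟩
  refine ⟨(l.map (·⁻¹)).reverse, ?_, ?_, by simp⟩
  · simpa using fun x hx => by simpa using (hl _ hx).inv
  · rw [← List.prod_inv_reverse, hprod, inv_inv]

end WordLength

section WordDist

variable {G : Type*} [Group G] {S : Finset G}

@[simp] lemma wordDist_self (g : G) : wordDist S g g = 0 := by
  simp [wordDist]

@[simp] lemma wordDist_one_left (g : G) : wordDist S 1 g = wordLength S g := by
  simp [wordDist]

@[simp] lemma wordDist_mul_left (g a b : G) : wordDist S (g * a) (g * b) = wordDist S a b := by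
  simp [wordDist, mul_assoc]

lemma wordDist_comm (g h : G) : wordDist S g h = wordDist S h g := by
  rw [wordDist, ← wordLength_inv, mul_inv_rev, inv_inv, wordDist]

lemma wordDist_eq_zero_iff (hS : Subgroup.closure (S : Set G) = ⊤) {g h : G} :
    wordDist S g h = 0 ↔ g = h := by
  rw [wordDist, wordLength_eq_zero_iff hS, inv_mul_eq_one]

lemma wordDist_triangle (hS : Subgroup.closure (S : Set G) = ⊤) (g h k : G) :
    wordDist S g k ≤ wordDist S g h + wordDist S h k := by
  simpa [wordDist, mul_assoc] using wordLength_mul_le hS (g⁻¹ * h) (h⁻¹ * k)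

lemma wordLength_le_add_wordDist (hS : Subgroup.closure (S : Set G) = ⊤) (g h : G) :
    wordLength S h ≤ wordLength S g + wordDist S g h := by
  simpa using wordDist_triangle hS 1 g h

end WordDist

section GeodesicWord

variable {G : Type*} [Group G] {S : Finset G}

def pathVertex (w : List G) (k : ℕ) : G := (w.take k).prod

@[simp] lemma pathVertex_zero (w : List G) : pathVertex w 0 = 1 := rfl

lemma pathVertex_of_length_le {w : List G} {k : ℕ} (hk : w.length ≤ k) :
    pathVertex w k = w.prod := by
  rw [pathVertex, List.take_of_length_le hk]

lemma pathVertex_append_of_le_length {x y : List G} {k : ℕ} (hk : k ≤ x.length) :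
    pathVertex (x ++ y) k = pathVertex x k := by
  rw [pathVertex, List.take_append_of_le_length hk, pathVertex]

lemma pathVertex_append_length_add (x y : List G) (k : ℕ) :
    pathVertex (x ++ y) (x.length + k) = x.prod * pathVertex y k := by
  rw [pathVertex, List.take_length_add_append, List.prod_append, pathVertex]

lemma IsGeodesicWord.of_isInfix (hS : Subgroup.closure (S : Set G) = ⊤) {w y : List G}
    (hw : IsGeodesicWord S w) (hyw : y <:+: w) : IsGeodesicWord S y := by
  obtain ⟨x, z, rfl⟩ := hyw
  obtain ⟨hl, hlen⟩ := hw
  have hx := wordLength_le_length (l := x) fun a ha => hl a (by simp [ha])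
  have hy := wordLength_le_length (l := y) fun a ha => hl a (by simp [ha])
  have hz := wordLength_le_length (l := z) fun a ha => hl a (by simp [ha])
  have hxyz := (wordLength_mul_le hS _ _).trans (Nat.add_le_add_right
    (wordLength_mul_le hS x.prod y.prod) (wordLength S z.prod))
  simp only [List.prod_append, List.length_append] at hlen
  exact ⟨fun a ha => hl a (by simp [ha]), by omega⟩

lemma IsGeodesicWord.wordDist_pathVertex (hS : Subgroup.closure (S : Set G) = ⊤)
    {w : List G} (hw : IsGeodesicWord S w) {j k : ℕ} (hjk : j ≤ k) (hk : k ≤ w.length) :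
    wordDist S (pathVertex w j) (pathVertex w k) = k - j := by
  have hmid : IsGeodesicWord S ((w.take k).drop j) :=
    hw.of_isInfix hS ((List.drop_suffix _ _).isInfix.trans (List.take_prefix _ _).isInfix)
  have hsplit : pathVertex w k = pathVertex w j * ((w.take k).drop j).prod := by
    conv_lhs => rw [pathVertex, ← List.take_append_drop j (w.take k)]
    rw [List.prod_append, List.take_take, Nat.min_eq_left hjk, pathVertex]
  rw [hsplit, wordDist, inv_mul_cancel_left, hmid.2]
  simp [hk]

lemma IsGeodesicWord.wordLength_pathVertex (hS : Subgroup.closure (S : Set G) = ⊤)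
    {w : List G} (hw : IsGeodesicWord S w) {k : ℕ} (hk : k ≤ w.length) :
    wordLength S (pathVertex w k) = k := by
  simpa using hw.wordDist_pathVertex hS (Nat.zero_le k) hk

lemma segVerts_mono {w : List G} {i j i' j' : ℕ} (hi : i' ≤ i) (hj : j ≤ j') :
    segVerts w i j ⊆ segVerts w i' j' := by
  rintro g ⟨k, hik, hkj, rfl⟩
  exact ⟨k, hi.trans hik, hkj.trans hj, rfl⟩

lemma pathVertex_mem_segVerts {w : List G} {i j k : ℕ} (hik : i ≤ k) (hkj : k ≤ j) :
    pathVertex w k ∈ segVerts w i j :=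
  ⟨k, hik, hkj, rfl⟩

lemma segVerts_append_of_le_length {x y : List G} {i j : ℕ} (hj : j ≤ x.length) :
    segVerts (x ++ y) i j = segVerts x i j := by
  ext g
  refine exists_congr fun k => and_congr_right fun hik => and_congr_right fun hkj => ?_
  exact Eq.congr_left (pathVertex_append_of_le_length (hkj.trans hj))

lemma segVerts_append_of_length_le {x y : List G} {i j : ℕ} (hi : x.length ≤ i)
    (hj : x.length ≤ j) :
    segVerts (x ++ y) i j = (x.prod * ·) '' segVerts y (i - x.length) (j - x.length) := by
  ext g
  constructor
  · rintro ⟨k, hik, hkj, rfl⟩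
    refine ⟨pathVertex y (k - x.length), pathVertex_mem_segVerts (by omega) (by omega), ?_⟩
    change x.prod * pathVertex y (k - x.length) = pathVertex (x ++ y) k
    rw [← pathVertex_append_length_add, Nat.add_sub_cancel' (hi.trans hik)]
  · rintro ⟨_, ⟨k, hik, hkj, rfl⟩, rfl⟩
    exact ⟨x.length + k, by omega, by omega, pathVertex_append_length_add x y k⟩

end GeodesicWord

section Projection

variable {G : Type*} [Group G] {S : Finset G}

/-- `d(x, P)`, with junk value `0` for empty `P`. -/
noncomputable def wordInfDist (S : Finset G) (P : Set G) (x : G) : ℕ :=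
  sInf (wordDist S x '' P)

lemma wordInfDist_le {P : Set G} {p : G} (x : G) (hp : p ∈ P) :
    wordInfDist S P x ≤ wordDist S x p :=
  Nat.sInf_le (Set.mem_image_of_mem _ hp)

lemma exists_mem_wordDist_eq_wordInfDist {P : Set G} (hP : P.Nonempty) (x : G) :
    ∃ p ∈ P, wordDist S x p = wordInfDist S P x :=
  Nat.sInf_mem (hP.image _)

lemma mem_projPt_iff {P : Set G} {x p : G} :
    p ∈ projPt S P x ↔ p ∈ P ∧ wordDist S x p = wordInfDist S P x := by
  refine ⟨fun hp => ⟨hp.1, ?_⟩, fun hp => ⟨hp.1, fun q hq => hp.2 ▸ wordInfDist_le x hq⟩⟩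
  obtain ⟨q, hq, hxq⟩ := exists_mem_wordDist_eq_wordInfDist ⟨p, hp.1⟩ x
  exact le_antisymm (hxq ▸ hp.2 q hq) (wordInfDist_le x hp.1)

lemma projPt_nonempty {P : Set G} (hP : P.Nonempty) (x : G) : (projPt S P x).Nonempty := by
  obtain ⟨p, hp, hxp⟩ := exists_mem_wordDist_eq_wordInfDist hP x
  exact ⟨p, mem_projPt_iff.2 ⟨hp, hxp⟩⟩

lemma mem_projPt_of_subset {A P : Set G} {x p : G} (hAP : A ⊆ P) (hpA : p ∈ A)
    (hp : p ∈ projPt S P x) : p ∈ projPt S A x :=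
  ⟨hpA, fun q hq => hp.2 q (hAP hq)⟩

lemma wordInfDist_le_wordDist_add (hS : Subgroup.closure (S : Set G) = ⊤) {P : Set G}
    (hP : P.Nonempty) (x y : G) : wordInfDist S P y ≤ wordDist S y x + wordInfDist S P x := by
  obtain ⟨p, hp, hxp⟩ := exists_mem_wordDist_eq_wordInfDist hP x
  exact (wordInfDist_le y hp).trans (hxp ▸ wordDist_triangle hS y x p)

lemma mem_wordBall_self (x : G) (r : ℕ) : x ∈ wordBall S x r := by
  simp [wordBall]

lemma disjoint_wordBall_of_lt_wordInfDist {P : Set G} {x : G} {r : ℕ}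
    (h : r < wordInfDist S P x) : Disjoint (wordBall S x r) P :=
  Set.disjoint_left.2 fun _ ha haP => (lt_of_le_of_lt ha h).not_ge (wordInfDist_le x haP)

lemma wordBall_mul_left (g g₀ : G) (r : ℕ) :
    wordBall S (g * g₀) r = (g * ·) '' wordBall S g₀ r := by
  ext h
  rw [Set.image_mul_left]
  simp [wordBall, ← wordDist_mul_left (S := S) g g₀ (g⁻¹ * h)]

lemma projPt_image_mul_left (g : G) (P : Set G) (x : G) :
    projPt S ((g * ·) '' P) (g * x) = (g * ·) '' projPt S P x := by
  ext p
  constructor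
  · rintro ⟨⟨p, hp, rfl⟩, hmin⟩
    exact ⟨p, ⟨hp, fun q hq => by simpa using hmin _ ⟨q, hq, rfl⟩⟩, rfl⟩
  · rintro ⟨p, ⟨hp, hmin⟩, rfl⟩
    exact ⟨⟨p, hp, rfl⟩, by rintro _ ⟨q, hq, rfl⟩; simpa using hmin q hq⟩

lemma projSet_image_mul_left (g : G) (P B : Set G) :
    projSet S ((g * ·) '' P) ((g * ·) '' B) = (g * ·) '' projSet S P B := by
  simp only [projSet, Set.biUnion_image, Set.image_iUnion₂, projPt_image_mul_left]

end Projection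

section ContractingSet

variable {G : Type*} [Group G] {S : Finset G}

def IsContractingSet (S : Finset G) (D : ℕ) (P : Set G) : Prop :=
  ∀ g₀ : G, ∀ r : ℕ, Disjoint (wordBall S g₀ r) P →
    ∀ p ∈ projSet S P (wordBall S g₀ r), ∀ q ∈ projSet S P (wordBall S g₀ r),
      wordDist S p q ≤ D

lemma isContractingWord_iff {D : ℝ} (hD : 0 ≤ D) {w : List G} :
    IsContractingWord S D w ↔ IsGeodesicWord S w ∧
      ∀ i j, i ≤ j → j ≤ w.length → IsContractingSet S ⌊D⌋₊ (segVerts w i j) := by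
  simp only [IsContractingWord, IsContractingSet, ← Nat.le_floor_iff hD]

lemma IsContractingSet.wordDist_le {D : ℕ} {P : Set G} (hP : IsContractingSet S D P)
    {g₀ : G} {r : ℕ} (hB : Disjoint (wordBall S g₀ r) P) {x y p q : G}
    (hx : x ∈ wordBall S g₀ r) (hy : y ∈ wordBall S g₀ r)
    (hp : p ∈ projPt S P x) (hq : q ∈ projPt S P y) : wordDist S p q ≤ D :=
  hP g₀ r hB p (Set.mem_biUnion hx hp) q (Set.mem_biUnion hy hq)

lemma IsContractingSet.wordDist_le_of_projSet_subset {D : ℕ} {A P : Set G}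
    (hA : IsContractingSet S D A) (hAP : A ⊆ P) {g₀ : G} {r : ℕ}
    (hB : Disjoint (wordBall S g₀ r) P) (hsub : projSet S P (wordBall S g₀ r) ⊆ A) {p q : G}
    (hp : p ∈ projSet S P (wordBall S g₀ r)) (hq : q ∈ projSet S P (wordBall S g₀ r)) :
    wordDist S p q ≤ D := by
  obtain ⟨x, hx, hpx⟩ := Set.mem_iUnion₂.1 hp
  obtain ⟨y, hy, hqy⟩ := Set.mem_iUnion₂.1 hq
  exact hA.wordDist_le (hB.mono_right hAP) hx hy (mem_projPt_of_subset hAP (hsub hp) hpx)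
    (mem_projPt_of_subset hAP (hsub hq) hqy)

lemma IsContractingSet.image_mul_left {D : ℕ} {P : Set G} (hP : IsContractingSet S D P)
    (g : G) : IsContractingSet S D ((g * ·) '' P) := by
  intro g₀ r hB
  obtain ⟨g₁, rfl⟩ : ∃ g₁, g₀ = g * g₁ := ⟨g⁻¹ * g₀, by group⟩
  rw [wordBall_mul_left, Set.disjoint_image_iff (mul_right_injective g)] at hB
  rw [wordBall_mul_left, projSet_image_mul_left]
  rintro _ ⟨p, hp, rfl⟩ _ ⟨q, hq, rfl⟩
  simpa using hP g₁ r hB p hp q hq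

lemma isContractingSet_image_mul_left_iff {D : ℕ} {P : Set G} (g : G) :
    IsContractingSet S D ((g * ·) '' P) ↔ IsContractingSet S D P :=
  ⟨fun h => by
    simpa only [Set.image_image, inv_mul_cancel_left, Set.image_id'] using h.image_mul_left g⁻¹,
    fun h => h.image_mul_left g⟩

lemma isContractingSet_segVerts_append_iff {D : ℕ} {x y : List G} {i j : ℕ}
    (hi : x.length ≤ i) (hj : x.length ≤ j) :
    IsContractingSet S D (segVerts (x ++ y) i j) ↔
      IsContractingSet S D (segVerts y (i - x.length) (j - x.length)) := by
  rw [segVerts_append_of_length_le hi hj, isContractingSet_image_mul_left_iff]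

end ContractingSet

lemma Nat.exists_run_around {p : ℕ → Prop} {n t : ℕ} (h0 : ¬p 0) (hn : ¬p n) (htn : t ≤ n)
    (ht : p t) : ∃ a b, a < t ∧ t < b ∧ b ≤ n ∧ ¬p a ∧ ¬p b ∧ ∀ s, a < s → s < b → p s := by
  classical
  have hex : ∃ s, t ≤ s ∧ ¬p s := ⟨n, htn, hn⟩
  have hb : t ≤ Nat.find hex ∧ ¬p (Nat.find hex) := Nat.find_spec hex
  have hbmin : ∀ s < Nat.find hex, ¬(t ≤ s ∧ ¬p s) := fun s => Nat.find_min hex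
  have hbn : Nat.find hex ≤ n := Nat.find_min' hex ⟨htn, hn⟩
  have ha : ¬p (Nat.findGreatest (fun s => ¬p s) t) :=
    Nat.findGreatest_spec (P := fun s => ¬p s) (Nat.zero_le t) h0
  have hamax : ∀ s, Nat.findGreatest (fun s => ¬p s) t < s → s ≤ t → ¬¬p s :=
    fun s => Nat.findGreatest_is_greatest
  have hat : Nat.findGreatest (fun s => ¬p s) t ≤ t := Nat.findGreatest_le t
  generalize Nat.findGreatest (fun s => ¬p s) t = a at *
  generalize Nat.find hex = b at *
  have hat' : a ≠ t := fun h => ha (h ▸ ht)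
  have htb : t ≠ b := fun h => hb.2 (h ▸ ht)
  refine ⟨a, b, by omega, by omega, hbn, ha, hb.2, fun s has hsb => ?_⟩
  rcases le_or_gt s t with hst | hts
  · exact not_not.1 (hamax s has hst)
  · exact not_not.1 fun hs => hbmin s hsb ⟨hts.le, hs⟩

section Morse

variable {G : Type*} [Group G] {S : Finset G}

lemma IsGeodesicWord.wordInfDist_pathVertex_le_add (hS : Subgroup.closure (S : Set G) = ⊤)
    {z : List G} (hz : IsGeodesicWord S z) {P : Set G} (hP : P.Nonempty) {r s : ℕ}
    (hrs : r ≤ s) (hs : s ≤ z.length) :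
    wordInfDist S P (pathVertex z s) ≤ wordInfDist S P (pathVertex z r) + (s - r) ∧
      wordInfDist S P (pathVertex z r) ≤ wordInfDist S P (pathVertex z s) + (s - r) := by
  have hd := hz.wordDist_pathVertex hS hrs hs
  have h₁ := wordInfDist_le_wordDist_add hS hP (pathVertex z r) (pathVertex z s)
  have h₂ := wordInfDist_le_wordDist_add hS hP (pathVertex z s) (pathVertex z r)
  rw [wordDist_comm] at h₁
  omega

variable {D : ℕ} {P : Set G}

/-- Along a geodesic staying `δ`-far from `P`, consecutive windows of length `δ` lie in balls
disjoint from `P`, so the projection moves by at most `D` per window. -/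
lemma IsContractingSet.mul_wordDist_projPt_le (hS : Subgroup.closure (S : Set G) = ⊤)
    (hP : IsContractingSet S D P) (hPne : P.Nonempty) {z : List G} (hz : IsGeodesicWord S z)
    {δ : ℕ} (hδ : 0 < δ) {a b : ℕ} (hab : a ≤ b) (hb : b ≤ z.length)
    (hfar : ∀ s, a ≤ s → s ≤ b → δ < wordInfDist S P (pathVertex z s)) {p q : G}
    (hp : p ∈ projPt S P (pathVertex z a)) (hq : q ∈ projPt S P (pathVertex z b)) :
    δ * wordDist S p q ≤ (b - a + δ) * D := by
  induction b using Nat.strong_induction_on generalizing q with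
  | _ b ih =>
  have hball : ∀ s, a ≤ s → b - s ≤ δ → s ≤ b → ∀ p' ∈ projPt S P (pathVertex z s),
      wordDist S p' q ≤ D := by
    intro s has hsb hs p' hp'
    refine hP.wordDist_le (disjoint_wordBall_of_lt_wordInfDist (hfar b hab le_rfl)) ?_
      (mem_wordBall_self _ _) hp' hq
    change wordDist S _ _ ≤ δ
    rw [wordDist_comm, hz.wordDist_pathVertex hS hs hb]
    exact hsb
  rcases le_or_gt (b - a) δ with hshort | hlong
  · calc δ * wordDist S p q ≤ δ * D := Nat.mul_le_mul_left _ (hball a le_rfl hshort hab p hp)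
      _ ≤ (b - a + δ) * D := Nat.mul_le_mul_right _ (Nat.le_add_left _ _)
  · obtain ⟨q', hq'⟩ := projPt_nonempty (S := S) hPne (pathVertex z (b - δ))
    have h₁ := ih (b - δ) (by omega) (by omega) (by omega)
      (fun s has hsb => hfar s has (by omega)) hq'
    have h₂ := hball (b - δ) (by omega) (by omega) (by omega) q' hq'
    calc δ * wordDist S p q ≤ δ * (wordDist S p q' + wordDist S q' q) :=
          Nat.mul_le_mul_left _ (wordDist_triangle hS p q' q)
      _ ≤ (b - δ - a + δ) * D + δ * D := by rw [mul_add]; gcongr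
      _ = (b - a + δ) * D := by rw [← add_mul]; congr 1; omega

lemma IsContractingSet.sub_le_of_forall_lt_wordInfDist (hS : Subgroup.closure (S : Set G) = ⊤)
    (hP : IsContractingSet S D P) (hPne : P.Nonempty) {z : List G} (hz : IsGeodesicWord S z)
    {δ : ℕ} (hδ : 0 < δ) (hδD : 2 * D ≤ δ) {a b : ℕ} (hab : a ≤ b) (hb : b ≤ z.length)
    (hfar : ∀ s, a ≤ s → s ≤ b → δ < wordInfDist S P (pathVertex z s))
    (ha : wordInfDist S P (pathVertex z a) ≤ δ + 1)
    (hb' : wordInfDist S P (pathVertex z b) ≤ δ + 1) :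
    b - a ≤ 5 * δ + 4 := by
  obtain ⟨p, hp⟩ := projPt_nonempty (S := S) hPne (pathVertex z a)
  obtain ⟨q, hq⟩ := projPt_nonempty (S := S) hPne (pathVertex z b)
  have hdrift := hP.mul_wordDist_projPt_le hS hPne hz hδ hab hb hfar hp hq
  have hroute : b - a ≤ 2 * (δ + 1) + wordDist S p q := by
    have h₁ := wordDist_triangle hS (pathVertex z a) p (pathVertex z b)
    have h₂ := wordDist_triangle hS p q (pathVertex z b)
    rw [hz.wordDist_pathVertex hS hab hb, (mem_projPt_iff.1 hp).2] at h₁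
    rw [wordDist_comm q, (mem_projPt_iff.1 hq).2] at h₂
    omega
  generalize b - a = Λ at hdrift hroute ⊢
  -- `δΛ ≤ 2δ(δ + 1) + δ d(p, q) ≤ 2δ(δ + 1) + (Λ + δ)D` and `2D ≤ δ` give `Λ ≤ 5δ + 4`
  nlinarith

lemma IsContractingSet.wordInfDist_pathVertex_le (hS : Subgroup.closure (S : Set G) = ⊤)
    (hP : IsContractingSet S D P) (hPne : P.Nonempty) {z : List G} (hz : IsGeodesicWord S z)
    {δ : ℕ} (hδ : 0 < δ) (hδD : 2 * D ≤ δ) (h₀ : wordInfDist S P (pathVertex z 0) ≤ δ)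
    (hlast : wordInfDist S P (pathVertex z z.length) ≤ δ) {t : ℕ} (ht : t ≤ z.length) :
    wordInfDist S P (pathVertex z t) ≤ 6 * δ + 5 := by
  by_contra! hfar
  obtain ⟨a, b, hat, htb, hbn, ha, hb, hrun⟩ :=
    Nat.exists_run_around (p := fun s => δ < wordInfDist S P (pathVertex z s)) (by simpa)
      (by simpa) ht (by omega)
  have hstart : wordInfDist S P (pathVertex z (a + 1)) ≤ δ + 1 := by
    have := (hz.wordInfDist_pathVertex_le_add hS hPne (Nat.le_add_right a 1) (by omega)).1
    omega
  have hend : wordInfDist S P (pathVertex z (b - 1)) ≤ δ + 1 := by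
    have := (hz.wordInfDist_pathVertex_le_add hS hPne (Nat.sub_le b 1) hbn).2
    omega
  have hexc := hP.sub_le_of_forall_lt_wordInfDist hS hPne hz hδ hδD (by omega) (by omega)
    (fun s has hsb => hrun s (by omega) (by omega)) hstart hend
  have := (hz.wordInfDist_pathVertex_le_add hS hPne (show a + 1 ≤ t by omega) ht).1
  omega

end Morse

section Shortcut

variable {G : Type*} [Group G] {S : Finset G}

lemma one_mem_segVerts_zero (w : List G) (j : ℕ) : (1 : G) ∈ segVerts w 0 j :=
  pathVertex_mem_segVerts le_rfl (Nat.zero_le j)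

lemma IsGeodesicWord.wordDist_pathVertex_le_of_wordInfDist_le
    (hS : Subgroup.closure (S : Set G) = ⊤) {W z : List G} (hW : IsGeodesicWord S W)
    (hz : IsGeodesicWord S z) {K t : ℕ} (htz : t ≤ z.length) (htW : t ≤ W.length)
    (hK : wordInfDist S (segVerts W 0 W.length) (pathVertex z t) ≤ K) :
    wordDist S (pathVertex z t) (pathVertex W t) ≤ 2 * K := by
  obtain ⟨_, ⟨k, -, hk, rfl⟩, hdist⟩ :=
    exists_mem_wordDist_eq_wordInfDist (S := S) ⟨1, one_mem_segVerts_zero W W.length⟩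
      (pathVertex z t)
  change wordDist S (pathVertex z t) (pathVertex W k) = _ at hdist
  have hlen₁ := wordLength_le_add_wordDist hS (pathVertex z t) (pathVertex W k)
  have hlen₂ := wordLength_le_add_wordDist hS (pathVertex W k) (pathVertex z t)
  rw [hz.wordLength_pathVertex hS htz, hW.wordLength_pathVertex hS hk] at hlen₁ hlen₂
  rw [wordDist_comm] at hlen₂
  have hkt : wordDist S (pathVertex W k) (pathVertex W t) ≤ max (k - t) (t - k) := by
    rcases le_total k t with hkt | htk
    · rw [hW.wordDist_pathVertex hS hkt htW]; exact le_max_right _ _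
    · rw [wordDist_comm, hW.wordDist_pathVertex hS htk hk]; exact le_max_left _ _
  have := wordDist_triangle hS (pathVertex z t) (pathVertex W k) (pathVertex W t)
  omega

/-- A geodesic `z` from `1` to `W̄c` ends next to `W`, so by the Morse property (with
`δ = 2D + 1`) it stays `(12D + 11)`-close to `W`, and `z_t` is within `2(12D + 11) + 1` of
`W_{t+1}`. -/
lemma IsContractingSet.exists_near_pathVertex_of_not_geodesic
    (hS : Subgroup.closure (S : Set G) = ⊤) {D : ℕ} {W : List G} (hW : IsGeodesicWord S W)
    (hP : IsContractingSet S D (segVerts W 0 W.length)) {c : G} (hc : IsLetter S c)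
    (hshort : wordLength S (W.prod * c) ≤ W.length) {t : ℕ} (ht : t < W.length) :
    ∃ g, wordLength S g = t ∧ wordDist S (pathVertex W (t + 1)) g ≤ 24 * D + 23 ∧
      wordDist S g (W.prod * c) + t ≤ W.length := by
  obtain ⟨z, hz, hzprod⟩ := exists_isGeodesicWord_prod_eq hS (W.prod * c)
  have hPne : (segVerts W 0 W.length).Nonempty := ⟨1, one_mem_segVerts_zero W W.length⟩
  have hzlast : pathVertex z z.length = W.prod * c := by rw [pathVertex_of_length_le le_rfl, hzprod]
  have hWlast : pathVertex W W.length = W.prod := pathVertex_of_length_le le_rfl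
  have hcW : wordDist S (W.prod * c) W.prod ≤ 1 := by
    simpa [wordDist, wordLength_inv] using wordLength_le_length (l := [c]) (by simpa using hc)
  have hzlen : z.length = wordLength S (W.prod * c) := by rw [← hz.2, hzprod]
  have htz : t ≤ z.length := by
    have := wordLength_le_add_wordDist hS (W.prod * c) W.prod
    rw [hW.2] at this
    omega
  have hfirst : wordInfDist S (segVerts W 0 W.length) (pathVertex z 0) ≤ 2 * D + 1 := by
    have := wordInfDist_le (S := S) 1 (one_mem_segVerts_zero W W.length)
    simp only [wordDist_self, nonpos_iff_eq_zero] at this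
    simp [this]
  have hlast : wordInfDist S (segVerts W 0 W.length) (pathVertex z z.length) ≤ 2 * D + 1 := by
    have := wordInfDist_le (S := S) (pathVertex z z.length)
      (pathVertex_mem_segVerts (w := W) (Nat.zero_le W.length) le_rfl)
    have hd : wordDist S (pathVertex z z.length) (pathVertex W W.length) ≤ 1 := by
      rwa [hzlast, hWlast]
    omega
  have hmorse := hP.wordInfDist_pathVertex_le hS hPne hz (by omega) (by omega) hfirst hlast htz
  have hfellow := hW.wordDist_pathVertex_le_of_wordInfDist_le hS hz htz ht.le hmorse
  have hstep := hW.wordDist_pathVertex hS (Nat.le_add_right t 1) ht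
  rw [wordDist_comm] at hstep hfellow
  refine ⟨pathVertex z t, hz.wordLength_pathVertex hS htz, ?_, ?_⟩
  · have := wordDist_triangle hS (pathVertex W (t + 1)) (pathVertex W t) (pathVertex z t)
    omega
  · rw [← hzlast, hz.wordDist_pathVertex hS htz le_rfl]
    omega

end Shortcut

section Overlap

variable {G : Type*} [Group G] {S : Finset G}

lemma exists_wordDist_eq_of_le (hS : Subgroup.closure (S : Set G) = ⊤) {g h : G} {k : ℕ}
    (hk : k ≤ wordDist S g h) :
    ∃ z, wordDist S g z = k ∧ wordDist S z h = wordDist S g h - k := by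
  obtain ⟨l, hl, hprod⟩ := exists_isGeodesicWord_prod_eq hS (g⁻¹ * h)
  have hlen : l.length = wordDist S g h := by rw [← hl.2, hprod, wordDist]
  refine ⟨g * pathVertex l k, ?_, ?_⟩
  · rw [wordDist, inv_mul_cancel_left, hl.wordLength_pathVertex hS (hlen ▸ hk)]
  · calc wordDist S (g * pathVertex l k) h
        = wordDist S (g * pathVertex l k) (g * pathVertex l l.length) := by
          rw [pathVertex_of_length_le le_rfl, hprod, mul_inv_cancel_left]
      _ = wordDist S g h - k := by
          rw [wordDist_mul_left, hl.wordDist_pathVertex hS (hlen ▸ hk) le_rfl, hlen]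

lemma wordDist_pathVertex_succ_le_one {w : List G} (hw : ∀ x ∈ w, IsLetter S x) (k : ℕ) :
    wordDist S (pathVertex w k) (pathVertex w (k + 1)) ≤ 1 := by
  rw [wordDist, pathVertex, pathVertex, List.take_add_one, List.prod_append, inv_mul_cancel_left]
  refine (wordLength_le_length fun x hx => hw x ?_).trans Option.length_toList_le
  exact List.mem_of_getElem? (Option.mem_toList.1 hx)

variable {D : ℕ} {W : List G}

/-- With `e = W_{n+1}`, the ball about `y` of radius `d(y, e) - 1` misses `P_{i,n}(W)` and contains
a point at distance `1` from `e`, so contraction of `P_{i,n}(W)` applies twice. -/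
lemma IsContractingSet.wordDist_le_of_last_mem_projPt (hS : Subgroup.closure (S : Set G) = ⊤)
    (hW : ∀ x ∈ W, IsLetter S x) {i n : ℕ} (hin : i ≤ n)
    (hA : IsContractingSet S D (segVerts W i n)) {g₀ : G} {r : ℕ}
    (hB : Disjoint (wordBall S g₀ r) (segVerts W i (n + 1))) {x y p : G}
    (hx : x ∈ wordBall S g₀ r) (hy : y ∈ wordBall S g₀ r)
    (hp : p ∈ projPt S (segVerts W i (n + 1)) x) (hpA : p ∈ segVerts W i n)
    (he : pathVertex W (n + 1) ∈ projPt S (segVerts W i (n + 1)) y) :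
    wordDist S p (pathVertex W (n + 1)) ≤ 2 * D + 3 := by
  set e := pathVertex W (n + 1)
  have hAP : segVerts W i n ⊆ segVerts W i (n + 1) := segVerts_mono le_rfl n.le_succ
  have hlastA : pathVertex W n ∈ segVerts W i n := pathVertex_mem_segVerts hin le_rfl
  obtain ⟨a, ha⟩ := projPt_nonempty (S := S) ⟨_, hlastA⟩ y
  have hpa : wordDist S p a ≤ D :=
    hA.wordDist_le (hB.mono_right hAP) hx hy (mem_projPt_of_subset hAP hpA hp) ha
  have hye : 0 < wordDist S y e := Nat.pos_of_ne_zero fun h =>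
    Set.disjoint_left.1 hB hy ((wordDist_eq_zero_iff hS).1 h ▸ he.1)
  have hB' : Disjoint (wordBall S y (wordDist S y e - 1)) (segVerts W i n) :=
    Set.disjoint_left.2 fun b (hb : wordDist S y b ≤ _) hbA => by
      have := he.2 b (hAP hbA)
      omega
  obtain ⟨z, hyz, hze⟩ := exists_wordDist_eq_of_le hS (Nat.sub_le (wordDist S y e) 1)
  obtain ⟨a', ha'⟩ := projPt_nonempty (S := S) ⟨_, hlastA⟩ z
  have haa' : wordDist S a a' ≤ D :=
    hA.wordDist_le hB' (mem_wordBall_self _ _) hyz.le ha ha'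
  have hza' : wordDist S z a' ≤ 2 := by
    have := wordDist_triangle hS z e (pathVertex W n)
    have : wordDist S e (pathVertex W n) ≤ 1 := by
      rw [wordDist_comm]
      exact wordDist_pathVertex_succ_le_one hW n
    have := ha'.2 _ hlastA
    omega
  have := wordDist_triangle hS p a e
  have := wordDist_triangle hS a a' e
  have := wordDist_triangle hS a' z e
  rw [wordDist_comm a' z] at this
  omega

/-- `P_{i,n+1}(W)` is covered by `P_{i,n}(W)` and `P_{k,n+1}(W)`; when their overlap is long, a
ball whose projection reaches the last vertex projects entirely into `P_{k,n+1}(W)`. -/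
lemma IsContractingSet.segVerts_succ_of_overlap (hS : Subgroup.closure (S : Set G) = ⊤)
    (hW : IsGeodesicWord S W) {i k n : ℕ} (hik : i ≤ k) (hkn : k + 2 * D + 3 ≤ n + 1)
    (hn : n < W.length) (hA : IsContractingSet S D (segVerts W i n))
    (hC : IsContractingSet S D (segVerts W k (n + 1))) :
    IsContractingSet S D (segVerts W i (n + 1)) := by
  intro g₀ r hB p hp q hq
  by_cases hsub : projSet S (segVerts W i (n + 1)) (wordBall S g₀ r) ⊆ segVerts W i n
  · exact hA.wordDist_le_of_projSet_subset (segVerts_mono le_rfl n.le_succ) hB hsub hp hq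
  refine hC.wordDist_le_of_projSet_subset (segVerts_mono hik le_rfl) hB ?_ hp hq
  obtain ⟨_, he, heA⟩ := Set.not_subset.1 hsub
  obtain ⟨y, hy, hye⟩ := Set.mem_iUnion₂.1 he
  obtain ⟨l, hil, hln, rfl⟩ := hye.1
  obtain rfl : l = n + 1 := by
    by_contra hl
    exact heA ⟨l, hil, by omega, rfl⟩
  intro _ hp'
  obtain ⟨x, hx, hxp⟩ := Set.mem_iUnion₂.1 hp'
  obtain ⟨j, hij, hjn, rfl⟩ := hxp.1
  rcases hjn.eq_or_lt with rfl | hjn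
  · exact pathVertex_mem_segVerts (by omega) le_rfl
  · have := hA.wordDist_le_of_last_mem_projPt hS hW.1 (by omega) hB hx hy hxp
      (pathVertex_mem_segVerts hij (by omega)) hye
    change wordDist S (pathVertex W j) _ ≤ _ at this
    rw [hW.wordDist_pathVertex hS hjn.le (by omega)] at this
    exact pathVertex_mem_segVerts (by omega) (by omega)

end Overlap

section Cone

variable {G : Type*} [Group G] {S : Finset G}

/-- If `v w c` were not geodesic, the vertex of a shorter path near `v̄` would give an element
`v̄⁻¹ g` of the `m`-tail of `v`, hence of `u`, and the same shortcut would make `u w c` shorter. -/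
lemma isGeodesicWord_append_singleton_of_mTail_eq (hS : Subgroup.closure (S : Set G) = ⊤)
    {D m : ℕ} (hm : 24 * D + 23 ≤ m) {u v w : List G} {c : G} (hv : v ≠ [])
    (ht : mTail S m u = mTail S m v) (hu : IsGeodesicWord S (u ++ w ++ [c]))
    (hvw : IsGeodesicWord S (v ++ w))
    (hP : IsContractingSet S D (segVerts (v ++ w) 0 (v ++ w).length)) :
    IsGeodesicWord S (v ++ w ++ [c]) := by
  have hc : IsLetter S c := hu.1 c (by simp)
  have hletters : ∀ x ∈ v ++ w ++ [c], IsLetter S x :=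
    List.forall_mem_append.2 ⟨hvw.1, by simpa using hc⟩
  refine ⟨hletters, ?_⟩
  by_contra hne
  have hshort : wordLength S ((v ++ w).prod * c) ≤ (v ++ w).length := by
    have := wordLength_le_length hletters
    simp only [List.prod_append, List.prod_singleton, List.length_append,
      List.length_singleton] at this hne ⊢
    omega
  have hvpos := List.length_pos_iff.2 hv
  obtain ⟨g, hg, hgv, hgc⟩ :=
    hP.exists_near_pathVertex_of_not_geodesic hS hvw hc hshort (t := v.length - 1)
      (by simp; omega)
  have hvprod : pathVertex (v ++ w) (v.length - 1 + 1) = v.prod := by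
    rw [Nat.sub_add_cancel hvpos, pathVertex_append_of_le_length le_rfl,
      pathVertex_of_length_le le_rfl]
  have hv' : IsGeodesicWord S v := hvw.of_isInfix hS (List.prefix_append v w).isInfix
  have hu' : IsGeodesicWord S u :=
    hu.of_isInfix hS ((List.prefix_append u w).trans (List.prefix_append _ [c])).isInfix
  have htail : v.prod⁻¹ * g ∈ mTail S m u := by
    rw [ht]
    refine ⟨?_, ?_⟩
    · rw [hvprod] at hgv
      exact hgv.trans hm
    · rw [mul_inv_cancel_left, hg, hv'.2]
      omega
  have hsplit : (u ++ w ++ [c]).prod =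
      (u.prod * (v.prod⁻¹ * g)) * (g⁻¹ * ((v ++ w).prod * c)) := by
    simp only [List.prod_append, List.prod_singleton]
    group
  have hlen := wordLength_mul_le hS (u.prod * (v.prod⁻¹ * g)) (g⁻¹ * ((v ++ w).prod * c))
  rw [← hsplit, hu.2] at hlen
  have hgc' : wordLength S (g⁻¹ * ((v ++ w).prod * c)) + (v.length - 1) ≤ (v ++ w).length := hgc
  have htail' := htail.2
  rw [hu'.2] at htail'
  simp only [List.length_append, List.length_singleton] at hlen hgc'
  omega

/-- Segments of `v w c` inside `v w` contract by assumption, segments inside `w c` are translates of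
segments of `u w c`, and the remaining segments are glued from one of each kind. -/
lemma isContractingSet_segVerts_append_singleton (hS : Subgroup.closure (S : Set G) = ⊤)
    {D : ℕ} {u v w : List G} {c : G} (hw : 2 * D + 2 ≤ w.length)
    (hvwc : IsGeodesicWord S (v ++ w ++ [c]))
    (hvw : ∀ i j, i ≤ j → j ≤ (v ++ w).length → IsContractingSet S D (segVerts (v ++ w) i j))
    (huwc : ∀ i j, i ≤ j → j ≤ (u ++ w ++ [c]).length →
      IsContractingSet S D (segVerts (u ++ w ++ [c]) i j))
    {i j : ℕ} (hij : i ≤ j) (hj : j ≤ (v ++ w ++ [c]).length) :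
    IsContractingSet S D (segVerts (v ++ w ++ [c]) i j) := by
  simp only [List.length_append, List.length_singleton] at hvw huwc hj
  have hprefix : ∀ i j, i ≤ j → j ≤ v.length + w.length →
      IsContractingSet S D (segVerts (v ++ w ++ [c]) i j) := fun i j hij hj => by
    rw [segVerts_append_of_le_length (by simpa using hj)]
    exact hvw i j hij hj
  have hsuffix : ∀ i j, v.length ≤ i → i ≤ j → j ≤ v.length + w.length + 1 →
      IsContractingSet S D (segVerts (v ++ w ++ [c]) i j) := fun i j hi hij hj => by
    have hu := huwc (i - v.length + u.length) (j - v.length + u.length) (by omega) (by omega)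
    rw [List.append_assoc] at hu ⊢
    rw [isContractingSet_segVerts_append_iff (by omega) (by omega)] at hu ⊢
    simpa using hu
  rcases le_or_gt j (v.length + w.length) with hjn | hjn
  · exact hprefix i j hij hjn
  rcases le_or_gt v.length i with hvi | hiv
  · exact hsuffix i j hvi hij hj
  obtain rfl : j = v.length + w.length + 1 := by omega
  exact (hprefix i _ (by omega) le_rfl).segVerts_succ_of_overlap hS hvwc hiv.le (by omega)
    (by simp) (hsuffix _ _ le_rfl (by omega) le_rfl)

lemma IsContractingWord.of_append {D : ℝ} {x y : List G} (hS : Subgroup.closure (S : Set G) = ⊤)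
    (h : IsContractingWord S D (x ++ y)) : IsContractingWord S D x := by
  refine ⟨h.1.of_isInfix hS (List.prefix_append x y).isInfix, fun i j hij hj => ?_⟩
  rw [← segVerts_append_of_le_length (y := y) hj]
  exact h.2 i j hij (hj.trans (by simp))

lemma mem_cone_of_append_mem_cone (hS : Subgroup.closure (S : Set G) = ⊤) {D : ℝ}
    {u w w' : List G} (h : w ++ w' ∈ cone S D u) : w ∈ cone S D u :=
  ⟨(List.forall_mem_append.1 h.1).1, (List.append_assoc u w w' ▸ h.2).of_append hS⟩

lemma append_singleton_mem_cone_of_mTail_eq (hS : Subgroup.closure (S : Set G) = ⊤) {D : ℝ}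
    (hD : 0 ≤ D) {m : ℕ} (hm : 24 * ⌊D⌋₊ + 23 ≤ m) {u v w : List G} {c : G} (hv : v ≠ [])
    (ht : mTail S m u = mTail S m v) (hwm : m ≤ w.length) (hu : w ++ [c] ∈ cone S D u)
    (hvw : w ∈ cone S D v) : w ++ [c] ∈ cone S D v := by
  obtain ⟨hug, huc⟩ := (isContractingWord_iff hD).1 (List.append_assoc u w [c] ▸ hu.2)
  obtain ⟨hvg, hvc⟩ := (isContractingWord_iff hD).1 hvw.2
  have hgeo := isGeodesicWord_append_singleton_of_mTail_eq hS hm hv ht hug hvg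
    (hvc 0 _ (Nat.zero_le _) le_rfl)
  refine ⟨hu.1, ?_⟩
  rw [← List.append_assoc, isContractingWord_iff hD]
  exact ⟨hgeo, fun i j hij hj =>
    isContractingSet_segVerts_append_singleton hS (by omega) hgeo hvc huc hij hj⟩

lemma cone_subset_of_mTail_eq (hS : Subgroup.closure (S : Set G) = ⊤) {D : ℝ} (hD : 0 ≤ D)
    {m : ℕ} (hm : 24 * ⌊D⌋₊ + 23 ≤ m) {u v : List G} (hv : v ≠ [])
    (ht : mTail S m u = mTail S m v)
    (hty : localContractingType S D m u = localContractingType S D m v) :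
    cone S D u ⊆ cone S D v := by
  have hlocal : ∀ w, w.length ≤ m → w ∈ cone S D u → w ∈ cone S D v := fun w hwm hw => by
    have : w ∈ localContractingType S D m v := by rw [← hty]; exact ⟨hwm, hw⟩
    exact this.2
  intro w hw
  induction w using List.reverseRecOn with
  | nil => exact hlocal [] (Nat.zero_le m) hw
  | append_singleton w c ih =>
    by_cases hwm : (w ++ [c]).length ≤ m
    · exact hlocal _ hwm hw
    · refine append_singleton_mem_cone_of_mTail_eq hS hD hm hv ht ?_ hw
        (ih (mem_cone_of_append_mem_cone hS hw))
      simp only [List.length_append, List.length_singleton] at hwm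
      omega

lemma mTail_eq_empty_iff (hS : Subgroup.closure (S : Set G) = ⊤) {m : ℕ} (hm : 1 ≤ m)
    {u : List G} (hu : IsGeodesicWord S u) : mTail S m u = ∅ ↔ u = [] := by
  refine ⟨fun h => ?_, fun h => by simp [h, mTail]⟩
  by_contra hne
  have hpos := List.length_pos_iff.2 hne
  have hlast : pathVertex u (u.length - 1 + 1) = u.prod := by
    rw [Nat.sub_add_cancel hpos, pathVertex_of_length_le le_rfl]
  refine (Set.eq_empty_iff_forall_notMem.1 h) (u.prod⁻¹ * pathVertex u (u.length - 1)) ⟨?_, ?_⟩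
  · have := wordDist_pathVertex_succ_le_one hu.1 (u.length - 1)
    rw [hlast, wordDist_comm] at this
    exact this.trans hm
  · rw [mul_inv_cancel_left, hu.wordLength_pathVertex hS (Nat.sub_le _ _), hu.2]
    omega

end Cone

/-- there is an `m` such that any two geodesic words with the same
`m`-tail and the same `m`-local contracting type have the same `D`-contracting
cone. -/
theorem cone_types_determined_locally {G : Type} [Group G] (S : Finset G)
    (hS : Subgroup.closure (S : Set G) = ⊤) (D : ℝ) (hD : 0 ≤ D) :
    ∃ m : ℕ, ∀ u v : List G, IsGeodesicWord S u → IsGeodesicWord S v →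
      mTail S m u = mTail S m v →
      localContractingType S D m u = localContractingType S D m v →
      cone S D u = cone S D v := by
  refine ⟨24 * ⌊D⌋₊ + 23, fun u v hu hv ht hty => ?_⟩
  have hm : 1 ≤ 24 * ⌊D⌋₊ + 23 := by omega
  have hnil : u = [] ↔ v = [] := by
    rw [← mTail_eq_empty_iff hS hm hu, ht, mTail_eq_empty_iff hS hm hv]
  rcases eq_or_ne v [] with rfl | hv0
  · rw [hnil.2 rfl]
  · exact (cone_subset_of_mTail_eq hS hD le_rfl hv0 ht hty).antisymm
      (cone_subset_of_mTail_eq hS hD le_rfl (mt hnil.1 hv0) ht.symm hty.symm)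
end

section
/- Let Σ be a finite alphabet and let L be a regular language over Σ. For each n ∈ ℕ let a_n denote the number of words of length n in L. Then the sequence (a_n) satisfies a linear recursion: there exist k ≥ 1 and integers c₁, …, c_k such that a_{n+k} = c₁·a_{n+k−1} + c₂·a_{n+k−2} + ⋯ + c_k·a_n for all n ∈ ℕ. -/
/-!
Let `T` be the transfer matrix of a DFA for `L`: its `(s, t)` entry counts the letters leading
from `s` to `t`. The numbers of accepted words of length `n` read from each state form the vector
`T ^ n *ᵥ 1_F`, with `1_F` the indicator of the accepting states, so `a n = (T ^ n *ᵥ 1_F) s₀`.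
By Cayley–Hamilton `T` is annihilated by its characteristic polynomial, which is monic of degree
`|σ| ≥ 1`; hence every sequence `φ (T ^ n)` with `φ` linear, in particular `a`, satisfies the
linear recursion whose coefficients are those of that polynomial.
-/

open Polynomial Finset Matrix

namespace LinearRecurrence

variable {R : Type*} [CommRing R]

/-- For monic `p`, this is the recurrence whose `charPoly` is `p`. -/
noncomputable def ofMonic (p : R[X]) : LinearRecurrence R :=
  ⟨p.natDegree, fun i => -p.coeff i⟩

theorem isSolution_ofMonic_of_aeval_eq_zero {S : Type*} [Ring S] [Algebra R S] {p : R[X]}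
    (hp : p.Monic) {T : S} (hT : aeval T p = 0) (φ : S →ₗ[R] R) :
    (ofMonic p).IsSolution fun n => φ (T ^ n) := by
  intro n
  have hpow : T ^ (n + p.natDegree) = -∑ i ∈ range p.natDegree, p.coeff i • T ^ (n + i) := by
    have h := congrArg (T ^ n * ·) hT
    simp only [mul_zero] at h
    rw [hp.as_sum] at h
    simp only [map_add, map_sum, map_mul, aeval_C, aeval_X, map_pow, mul_add, mul_sum,
      Algebra.algebraMap_eq_smul_one, smul_mul_assoc, one_mul, mul_smul_comm, ← pow_add] at h
    exact eq_neg_of_add_eq_zero_left h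
  simp only [ofMonic, hpow, map_neg, map_sum, map_smul, smul_eq_mul, neg_mul, sum_neg_distrib]
  exact congrArg _ (Fin.sum_univ_eq_sum_range (fun i => p.coeff i * φ (T ^ (n + i))) _).symm

theorem IsSolution.eq_sum_rev {E : LinearRecurrence R} {u : ℕ → R} (h : E.IsSolution u)
    (n : ℕ) :
    u (n + E.order) = ∑ i : Fin E.order, E.coeffs i.rev * u (n + E.order - 1 - i) := by
  rw [h n, ← Equiv.sum_comp Fin.revPerm]
  refine Finset.sum_congr rfl fun i _ => ?_
  rw [Fin.revPerm_apply, Fin.val_rev]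
  congr 2
  omega

end LinearRecurrence

namespace DFA

variable {α σ : Type*} (M : DFA α σ)

noncomputable def countFrom (s : σ) (n : ℕ) : ℕ :=
  {w | w ∈ M.acceptsFrom s ∧ w.length = n}.ncard

theorem countFrom_zero [DecidablePred (· ∈ M.accept)] (s : σ) :
    M.countFrom s 0 = if s ∈ M.accept then 1 else 0 := by
  have hwords : {w | w ∈ M.acceptsFrom s ∧ w.length = 0} =
      if s ∈ M.accept then {[]} else ∅ := by
    ext (_ | _) <;> split_ifs <;> simp [mem_acceptsFrom, *]
  rw [countFrom, hwords]
  split_ifs <;> simp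

variable [Fintype α]

theorem countFrom_succ (s : σ) (n : ℕ) :
    M.countFrom s (n + 1) = ∑ x, M.countFrom (M.step s x) n := by
  have hwords : {w | w ∈ M.acceptsFrom s ∧ w.length = n + 1} =
      ⋃ x, (x :: ·) '' {w | w ∈ M.acceptsFrom (M.step s x) ∧ w.length = n} := by
    ext (_ | ⟨x, w⟩) <;> simp [mem_acceptsFrom, evalFrom_cons]
  rw [countFrom, hwords, Set.ncard_iUnion_of_finite, finsum_eq_sum_of_fintype]
  · simp only [Set.ncard_image_of_injective _ List.cons_injective, countFrom]
  · exact fun x => ((List.finite_length_eq α n).subset fun w hw => hw.2).image _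
  · intro x y hxy
    simp only [Function.onFun, Set.disjoint_left, Set.mem_image, not_exists, not_and]
    rintro _ ⟨w, -, rfl⟩ w' - h
    exact hxy (List.cons_eq_cons.mp h).1.symm

variable [Fintype σ] [DecidableEq σ]

def transferMatrix : Matrix σ σ ℤ := fun s t => #{x | M.step s x = t}

theorem transferMatrix_mulVec (c : σ → ℤ) (s : σ) :
    (M.transferMatrix *ᵥ c) s = ∑ x, c (M.step s x) := by
  simp only [Matrix.mulVec, dotProduct, transferMatrix, card_eq_sum_ones, Nat.cast_sum,
    Nat.cast_one, sum_mul, one_mul]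
  exact sum_fiberwise' univ (M.step s) c

theorem countFrom_eq_transferMatrix_pow_mulVec [DecidablePred (· ∈ M.accept)] (n : ℕ) :
    (fun s => (M.countFrom s n : ℤ)) =
      M.transferMatrix ^ n *ᵥ fun t => if t ∈ M.accept then 1 else 0 := by
  induction n with
  | zero => ext s; simp [countFrom_zero]
  | succ n ih =>
    ext s
    rw [pow_succ', ← Matrix.mulVec_mulVec, ← ih, transferMatrix_mulVec, countFrom_succ]
    push_cast
    rfl

end DFA

/-- for a regular language `L` over a finite alphabet `A`, the
sequence counting the words of each length in `L` satisfies a linear recursion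
with integer coefficients. -/
theorem regular_language_count_linear_recursion {A : Type} [Fintype A]
    (L : Language A) (hL : L.IsRegular)
    (a : ℕ → ℕ) (ha : ∀ n, a n = Set.ncard {w : List A | w ∈ L ∧ w.length = n}) :
    ∃ k : ℕ, 1 ≤ k ∧ ∃ c : Fin k → ℤ,
      ∀ n : ℕ, (a (n + k) : ℤ) = ∑ i : Fin k, c i * (a (n + k - 1 - (i : ℕ)) : ℤ) := by
  classical
  obtain ⟨σ, _, M, rfl⟩ := hL
  let T := M.transferMatrix
  let E := LinearRecurrence.ofMonic T.charpoly
  let φ : Matrix σ σ ℤ →ₗ[ℤ] ℤ :=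
    (LinearMap.proj M.start).comp
      ((Matrix.mulVecBilin ℤ ℤ).flip fun t => if t ∈ M.accept then 1 else 0)
  have hsol : E.IsSolution fun n => (a n : ℤ) := by
    convert LinearRecurrence.isSolution_ofMonic_of_aeval_eq_zero T.charpoly_monic
      T.aeval_self_charpoly φ with n
    rw [ha]
    exact congrFun (M.countFrom_eq_transferMatrix_pow_mulVec n) M.start
  have hE : E.order = Fintype.card σ := T.charpoly_natDegree_eq_dim
  exact ⟨E.order, hE ▸ Fintype.card_pos_iff.mpr ⟨M.start⟩, fun i => E.coeffs i.rev,
    hsol.eq_sum_rev⟩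
end
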